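/- Correctness of the two-pointer merge for constrained label pairing: given two finite lists of labels A = [(a₁ʳ,a₁ᵖ),…] sorted by increasing resource and B similarly, with both lists Pareto-optimal (increasing resource implies increasing profit), the maximum of aᵖ + bᵖ over pairs (a,b) ∈ A × B with aʳ + bʳ ≤ R can be computed by a single simultaneous sweep of A in increasing resource order and B in decreasing resource order; the sweep's output equals the true maximum. -/

import Mathlib

/-- A list of labels is Pareto-sorted if it is strictly increasing in resource and
strictly increasing in profit. -/
def ParetoSorted (L : List (ℝ × ℝ)) : Prop :=
  L.Chain' (fun x y => x.1 < y.1 ∧ x.2 < y.2)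

/-!
The sweep records, for each `a ∈ A`, the pair `(a, b)` with `b` the feasible element of `B` of
largest resource. Any other feasible `b'` has `b'ʳ ≤ bʳ`, hence `b'ᵖ ≤ bᵖ` because `B` is
Pareto-sorted, so every feasible value is dominated by a recorded one and the two suprema agree
(also when no pair is feasible: both sides are then `sSup ∅`).
-/

namespace ParetoSorted

theorem pairwise {L : List (ℝ × ℝ)} (hL : ParetoSorted L) :
    L.Pairwise (fun x y => x.1 < y.1 ∧ x.2 < y.2) :=
  @List.IsChain.pairwise _ _ _ ⟨fun hxy hyz => ⟨hxy.1.trans hyz.1, hxy.2.trans hyz.2⟩⟩ hL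

theorem snd_le_snd_of_fst_le {L : List (ℝ × ℝ)} (hL : ParetoSorted L) {b b' : ℝ × ℝ}
    (hb : b ∈ L) (hb' : b' ∈ L) (h : b.1 ≤ b'.1) : b.2 ≤ b'.2 := by
  refine List.Pairwise.forall_of_forall_of_flip (R := fun x y : ℝ × ℝ => x.1 ≤ y.1 → x.2 ≤ y.2)
    (fun _ _ _ => le_rfl) ?_ ?_ hb hb' h
  · exact hL.pairwise.imp fun hxy _ => hxy.2.le
  · exact hL.pairwise.imp fun hxy hyx => absurd hyx (not_le.mpr hxy.1)

end ParetoSorted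

theorem List.exists_mem_max_image_of_exists {α β : Type*} [LinearOrder β] {l : List α}
    (f : α → β) {P : α → Prop} (h : ∃ b ∈ l, P b) :
    ∃ m ∈ l, P m ∧ ∀ b ∈ l, P b → f b ≤ f m := by
  classical
  obtain ⟨b, hb, hPb⟩ := h
  obtain ⟨m, hm, hmax⟩ := Finset.exists_max_image (l.toFinset.filter P) f
    ⟨b, by simpa using ⟨hb, hPb⟩⟩
  simp only [Finset.mem_filter, List.mem_toFinset] at hm hmax
  exact ⟨m, hm.1, hm.2, fun b hb hPb => hmax b ⟨hb, hPb⟩⟩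

theorem stmt_11_general (A B : List (ℝ × ℝ)) (R : ℝ)
    (hB : ParetoSorted B) :
    sSup {x : ℝ | ∃ a ∈ A, ∃ b ∈ B, a.1 + b.1 ≤ R ∧ x = a.2 + b.2} =
    sSup {x : ℝ | ∃ a ∈ A, ∃ b ∈ B, a.1 + b.1 ≤ R ∧
      (∀ b' ∈ B, a.1 + b'.1 ≤ R → b'.1 ≤ b.1) ∧ x = a.2 + b.2} := by
  apply csSup_eq_csSup_of_forall_exists_le
  · rintro x ⟨a, ha, b, hb, hfeas, rfl⟩
    obtain ⟨m, hm, hmfeas, hmax⟩ :=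
      B.exists_mem_max_image_of_exists Prod.fst (P := fun b' => a.1 + b'.1 ≤ R) ⟨b, hb, hfeas⟩
    have hbm : b.2 ≤ m.2 := hB.snd_le_snd_of_fst_le hb hm (hmax b hb hfeas)
    exact ⟨a.2 + m.2, ⟨a, ha, m, hm, hmfeas, hmax, rfl⟩, by linarith⟩
  · rintro y ⟨a, ha, b, hb, hfeas, -, rfl⟩
    exact ⟨a.2 + b.2, ⟨a, ha, b, hb, hfeas, rfl⟩, le_rfl⟩

/-- Correctness of the two-pointer sweep: the maximum of aᵖ + bᵖ over feasible pairs
(aʳ + bʳ ≤ R) equals the maximum of the values recorded by the sweep, namely the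
values aᵖ + bᵖ where b is the feasible element of B of maximum resource for a. -/
theorem stmt_11 (A B : List (ℝ × ℝ)) (R : ℝ)
    (hA : ParetoSorted A) (hB : ParetoSorted B) :
    sSup {x : ℝ | ∃ a ∈ A, ∃ b ∈ B, a.1 + b.1 ≤ R ∧ x = a.2 + b.2} =
    sSup {x : ℝ | ∃ a ∈ A, ∃ b ∈ B, a.1 + b.1 ≤ R ∧
      (∀ b' ∈ B, a.1 + b'.1 ≤ R → b'.1 ≤ b.1) ∧ x = a.2 + b.2} :=
  stmt_11_general A B R hB
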